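/- There exists a (4,5) broadcast on the infinite grid whose density exists and equals 1/8, which is strictly less than 1/5, the optimal density of a (2,1) broadcast; hence the optimal (2,1) and (4,5) broadcast densities are not equal, refuting the conjecture of Blessing, Insko, Johnson, and Mauretour that the optimal (t,r) and (t+2, r+4) broadcast densities coincide. -/

import Mathlib

open Filter Topology

/-- Graph (L¹) distance on the infinite grid ℤ×ℤ. -/
def gridDist (u v : ℤ × ℤ) : ℕ := (u.1 - v.1).natAbs + (u.2 - v.2).natAbs

open Classical in
/-- Total signal received at `v` from towers of strength `t` located at the points of `S`:
the finite sum `∑_{T ∈ S, dist(v,T) < t} (t − dist(v,T))`. -/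
noncomputable def totalSignal (t : ℕ) (S : Set (ℤ × ℤ)) (v : ℤ × ℤ) : ℕ :=
  ∑ T ∈ (Finset.Icc (v.1 - (t : ℤ)) (v.1 + (t : ℤ)) ×ˢ
      Finset.Icc (v.2 - (t : ℤ)) (v.2 + (t : ℤ))).filter
      (fun T => T ∈ S ∧ gridDist v T < t),
    (t - gridDist v T)

/-- `S` is a `(t,r)` broadcast if every vertex receives total signal at least `r`. -/
def IsBroadcast (t r : ℕ) (S : Set (ℤ × ℤ)) : Prop :=
  ∀ v : ℤ × ℤ, r ≤ totalSignal t S v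

/-- The standard pattern `T(d,e) = {(dx+ey, y) : x, y ∈ ℤ}`. -/
def stdPattern (d e : ℤ) : Set (ℤ × ℤ) := {p | ∃ x y : ℤ, p = (d * x + e * y, y)}

open Classical in
/-- The number of points of `S` in the square `V_n = {(a,b) : |a| ≤ n, |b| ≤ n}`. -/
noncomputable def gridCount (S : Set (ℤ × ℤ)) (n : ℕ) : ℕ :=
  ((Finset.Icc (-(n : ℤ)) (n : ℤ) ×ˢ Finset.Icc (-(n : ℤ)) (n : ℤ)).filter
    (fun v => v ∈ S)).card

/-!
The lattice `T(8,2) = {(a, b) : a ≡ 2b [ZMOD 8]}` is a (4,5) broadcast of density 1/8.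
Translating by a lattice vector preserves the lattice, hence the signal, and moves every vertex
to one of `(0,0), …, (7,0)`; so the broadcast condition is eight finite computations. For the
density, each row of `V_n` contains `(2n+1)/8 + O(1)` lattice points.
-/

theorem gridDist_add_add_right (u v w : ℤ × ℤ) : gridDist (u + w) (v + w) = gridDist u v := by
  simp only [gridDist, Prod.fst_add, Prod.snd_add, add_sub_add_right_eq_sub]

theorem totalSignal_add_right {S : Set (ℤ × ℤ)} {w : ℤ × ℤ} (hS : ∀ p, p + w ∈ S ↔ p ∈ S)
    (t : ℕ) (v : ℤ × ℤ) : totalSignal t S (v + w) = totalSignal t S v := by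
  unfold totalSignal
  symm
  refine Finset.sum_nbij' (· + w) (· - w) ?_ ?_ (fun _ _ ↦ add_sub_cancel_right _ _)
    (fun _ _ ↦ sub_add_cancel _ _) (fun T _ ↦ by rw [gridDist_add_add_right])
  · intro T hT
    simp only [Finset.mem_filter, Finset.mem_product, Finset.mem_Icc,
      gridDist_add_add_right, hS, Prod.fst_add, Prod.snd_add] at hT ⊢
    exact ⟨by omega, hT.2⟩
  · intro T hT
    obtain ⟨T, rfl⟩ : ∃ T', T = T' + w := ⟨T - w, (sub_add_cancel T w).symm⟩
    simp only [Finset.mem_filter, Finset.mem_product, Finset.mem_Icc,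
      gridDist_add_add_right, hS, Prod.fst_add, Prod.snd_add, add_sub_cancel_right] at hT ⊢
    exact ⟨by omega, hT.2⟩

theorem mem_stdPattern_iff {d e : ℤ} {p : ℤ × ℤ} : p ∈ stdPattern d e ↔ d ∣ p.1 - e * p.2 := by
  constructor
  · rintro ⟨x, y, rfl⟩
    exact ⟨x, by ring⟩
  · rintro ⟨x, hx⟩
    exact ⟨x, p.2, Prod.ext (by linarith) rfl⟩

theorem add_mem_stdPattern_iff {d e : ℤ} {p w : ℤ × ℤ} (hw : w ∈ stdPattern d e) :
    p + w ∈ stdPattern d e ↔ p ∈ stdPattern d e := by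
  rw [mem_stdPattern_iff] at hw
  rw [mem_stdPattern_iff, mem_stdPattern_iff, Prod.fst_add, Prod.snd_add,
    show p.1 + w.1 - e * (p.2 + w.2) = (p.1 - e * p.2) + (w.1 - e * w.2) by ring]
  exact dvd_add_left hw

theorem isBroadcast_stdPattern_iff {t r : ℕ} {d e : ℤ} (hd : 0 < d) :
    IsBroadcast t r (stdPattern d e) ↔
      ∀ a ∈ Finset.Ico 0 d, r ≤ totalSignal t (stdPattern d e) (a, 0) := by
  refine ⟨fun h a _ ↦ h (a, 0), fun h v ↦ ?_⟩
  set a := (v.1 - e * v.2) % d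
  have hw : (v.1 - a, v.2) ∈ stdPattern d e := by
    rw [mem_stdPattern_iff, sub_right_comm]
    exact Int.dvd_self_sub_emod
  have hv : v = (a, 0) + (v.1 - a, v.2) := by ext <;> simp
  rw [hv, totalSignal_add_right (fun _ ↦ add_mem_stdPattern_iff hw)]
  exact h a (Finset.mem_Ico.2 ⟨Int.emod_nonneg _ hd.ne', Int.emod_lt_of_pos _ hd⟩)

theorem totalSignal_stdPattern (t : ℕ) (d e : ℤ) (v : ℤ × ℤ) :
    totalSignal t (stdPattern d e) v =
      ∑ T ∈ (Finset.Icc (v.1 - (t : ℤ)) (v.1 + (t : ℤ)) ×ˢ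
          Finset.Icc (v.2 - (t : ℤ)) (v.2 + (t : ℤ))).filter
          (fun T => d ∣ T.1 - e * T.2 ∧ gridDist v T < t),
        (t - gridDist v T) := by
  classical
  unfold totalSignal
  exact Finset.sum_congr (Finset.filter_congr fun _ _ ↦ and_congr_left' mem_stdPattern_iff)
    fun _ _ ↦ rfl

theorem isBroadcast_four_five_stdPattern_eight_two : IsBroadcast 4 5 (stdPattern 8 2) := by
  rw [isBroadcast_stdPattern_iff (by norm_num)]
  simp only [totalSignal_stdPattern]
  decide +kernel

section Density

open Finset

theorem le_mul_ceil_div_lt_add {d : ℤ} (hd : 0 < d) (m : ℤ) :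
    m ≤ d * ⌈(m : ℚ) / d⌉ ∧ d * ⌈(m : ℚ) / d⌉ < m + d := by
  have hdQ : (0 : ℚ) < d := by exact_mod_cast hd
  have h₁ : (m : ℚ) ≤ d * ⌈(m : ℚ) / d⌉ := by
    rw [← div_le_iff₀' hdQ]; exact Int.le_ceil _
  have h₂ : (d : ℚ) * ⌈(m : ℚ) / d⌉ < m + d := by
    rw [← lt_div_iff₀' hdQ, add_div, div_self hdQ.ne']; exact Int.ceil_lt_add_one _
  exact ⟨by exact_mod_cast h₁, by exact_mod_cast h₂⟩

theorem abs_mul_card_filter_modEq_Icc_sub_le {d : ℤ} (hd : 0 < d) (a b v : ℤ) (hab : a ≤ b + 1) :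
    |d * #{x ∈ Icc a b | x ≡ v [ZMOD d]} - (b + 1 - a)| ≤ d := by
  rw [← Ico_add_one_right_eq_Icc, Int.Ico_filter_modEq_card _ _ hd]
  have hA := le_mul_ceil_div_lt_add hd (a - v)
  have hB := le_mul_ceil_div_lt_add hd (b + 1 - v)
  push_cast at hA hB
  have hAB : ⌈((a : ℚ) - v) / d⌉ ≤ ⌈((b + 1 : ℤ) - (v : ℚ)) / d⌉ := by
    push_cast
    gcongr
    exact_mod_cast hab
  rw [max_eq_left (sub_nonneg.2 hAB), abs_le]
  push_cast
  constructor <;> linarith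

open Classical in
theorem gridCount_eq_sum (S : Set (ℤ × ℤ)) (n : ℕ) :
    gridCount S n = ∑ y ∈ Icc (-(n : ℤ)) n, #{x ∈ Icc (-(n : ℤ)) n | (x, y) ∈ S} := by
  simp only [gridCount, card_filter, sum_product_right]

theorem abs_mul_gridCount_stdPattern_sub_le {d : ℤ} (hd : 0 < d) (e : ℤ) (n : ℕ) :
    |d * gridCount (stdPattern d e) n - (2 * n + 1) ^ 2| ≤ d * (2 * n + 1) := by
  classical
  have hrow (y : ℤ) : #{x ∈ Icc (-(n : ℤ)) n | (x, y) ∈ stdPattern d e} =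
      #{x ∈ Icc (-(n : ℤ)) n | x ≡ e * y [ZMOD d]} := by
    congr 1
    refine filter_congr fun x _ ↦ ?_
    rw [mem_stdPattern_iff, Int.modEq_iff_dvd]
    exact dvd_sub_comm
  have hcard : #(Icc (-(n : ℤ)) n) = 2 * n + 1 := by simp; omega
  calc |d * gridCount (stdPattern d e) n - (2 * n + 1) ^ 2|
      = |∑ y ∈ Icc (-(n : ℤ)) n,
          (d * #{x ∈ Icc (-(n : ℤ)) n | x ≡ e * y [ZMOD d]} - (n + 1 - -n))| := by
        rw [gridCount_eq_sum, Nat.cast_sum, mul_sum, sum_sub_distrib, sum_const, hcard]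
        simp only [hrow, nsmul_eq_mul]
        push_cast
        ring_nf
    _ ≤ ∑ y ∈ Icc (-(n : ℤ)) n, d := by
        refine (abs_sum_le_sum_abs _ _).trans (sum_le_sum fun y _ ↦ ?_)
        exact abs_mul_card_filter_modEq_Icc_sub_le hd _ _ _ (by omega)
    _ = d * (2 * n + 1) := by rw [sum_const, hcard]; simp [mul_comm]

theorem tendsto_gridCount_stdPattern {d : ℤ} (hd : 0 < d) (e : ℤ) :
    Tendsto (fun n : ℕ => (gridCount (stdPattern d e) n : ℝ) / (2 * n + 1) ^ 2) atTop
      (𝓝 (1 / (d : ℝ))) := by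
  have hclose (n : ℕ) :
      ‖(gridCount (stdPattern d e) n : ℝ) / (2 * n + 1) ^ 2 - 1 / (d : ℝ)‖ ≤ 1 / (n + 1) := by
    have hcount : |(d : ℝ) * gridCount (stdPattern d e) n - (2 * n + 1) ^ 2| ≤
        d * (2 * n + 1 : ℝ) := by
      exact_mod_cast abs_mul_gridCount_stdPattern_sub_le hd e n
    calc ‖(gridCount (stdPattern d e) n : ℝ) / (2 * n + 1) ^ 2 - 1 / (d : ℝ)‖
        = |(d : ℝ) * gridCount (stdPattern d e) n - (2 * n + 1) ^ 2| / (d * (2 * n + 1) ^ 2) := by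
          rw [Real.norm_eq_abs, ← abs_of_pos (by positivity : (0 : ℝ) < d * (2 * n + 1) ^ 2),
            ← abs_div]
          congr 1
          field_simp
      _ ≤ d * (2 * n + 1) / (d * (2 * n + 1) ^ 2) := by gcongr
      _ = 1 / (2 * n + 1) := by field_simp
      _ ≤ 1 / (n + 1) := by gcongr; linarith
  exact tendsto_iff_norm_sub_tendsto_zero.2
    (squeeze_zero (fun _ ↦ norm_nonneg _) hclose tendsto_one_div_add_atTop_nhds_zero_nat)

end Density

theorem stmt11 :
    (∃ S : Set (ℤ × ℤ), IsBroadcast 4 5 S ∧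
      Filter.Tendsto (fun n : ℕ => (gridCount S n : ℝ) / (2 * n + 1) ^ 2)
        Filter.atTop (nhds (1 / 8))) ∧
    (1 : ℝ) / 8 < 1 / 5 := by
  refine ⟨⟨stdPattern 8 2, isBroadcast_four_five_stdPattern_eight_two, ?_⟩, by norm_num⟩
  simpa using tendsto_gridCount_stdPattern (d := 8) (by norm_num) 2
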